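/- arXiv:2109.11154 — 3 statements merged into one kernel-verified Lean document; each statement's English description precedes it below -/
import Mathlib

section
/- Let A be an m×n real matrix and η > 0 with ‖A‖ ≤ √(1/(3η)). Then the largest singular value of A(I − η AᵀA) equals σ₁(A) − η σ₁(A)³, and the smallest singular value of A(I − η AᵀA) equals σ_min(A) − η σ_min(A)³. -/
open Matrix BigOperators

/-- Spectral (operator) norm of a real matrix, via the induced Euclidean operator norm. -/
noncomputable def specNorm {m n : ℕ} (A : Matrix (Fin m) (Fin n) ℝ) : ℝ :=
  ‖(Matrix.toEuclideanLin (𝕜 := ℝ) A).toContinuousLinearMap‖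

/-- Singular values of a real matrix: square roots of the eigenvalues of `A * Aᵀ`. -/
noncomputable def sv {m n : ℕ} (A : Matrix (Fin m) (Fin n) ℝ) (i : Fin m) : ℝ :=
  Real.sqrt ((Matrix.isHermitian_mul_conjTranspose_self A).eigenvalues i)

/-- Largest singular value. -/
noncomputable def sigmaMax {m n : ℕ} (hm : 0 < m) (A : Matrix (Fin m) (Fin n) ℝ) : ℝ :=
  Finset.univ.sup' ⟨⟨0, hm⟩, Finset.mem_univ _⟩ (sv A)

/-- Smallest singular value. -/
noncomputable def sigmaMin {m n : ℕ} (hm : 0 < m) (A : Matrix (Fin m) (Fin n) ℝ) : ℝ :=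
  Finset.univ.inf' ⟨⟨0, hm⟩, Finset.mem_univ _⟩ (sv A)

/-!
With `M = A Aᵀ`, the matrix `B = A (1 - η AᵀA)` satisfies `B Bᵀ = M (1 - η M)²`, so by the spectral
mapping theorem the eigenvalues of `B Bᵀ` are the `λ (1 - ηλ)²` for the eigenvalues `λ ∈ [0, ‖A‖²]`
of `M`. Since `ηλ ≤ 1/3`, their square roots are `σ - ησ³` for the singular values `σ` of `A`, and
`σ ↦ σ - ησ³` is monotone on `[0, ‖A‖]`, so it maps the largest and smallest singular value of `A`
to those of `B`.
-/

theorem monotoneOn_sub_mul_pow_three {η : ℝ} (hη : 0 < η) :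
    MonotoneOn (fun x : ℝ => x - η * x ^ 3) (Set.Icc (-√(1 / (3 * η))) √(1 / (3 * η))) := by
  rintro a ⟨ha₁, ha₂⟩ b ⟨hb₁, hb₂⟩ hab
  have hs : √(1 / (3 * η)) ^ 2 * (3 * η) = 1 := by
    rw [Real.sq_sqrt (by positivity)]
    field_simp
  have ha : 3 * η * a ^ 2 ≤ 1 := by nlinarith [sq_le_sq' ha₁ ha₂]
  have hb : 3 * η * b ^ 2 ≤ 1 := by nlinarith [sq_le_sq' hb₁ hb₂]
  -- `b - ηb³ - (a - ηa³) = (b - a)(1 - η(a² + ab + b²))`, and `ab ≤ (a² + b²) / 2`.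
  have hquad : η * (a ^ 2 + a * b + b ^ 2) ≤ 1 := by nlinarith [sq_nonneg (a - b)]
  nlinarith [mul_nonneg (sub_nonneg.mpr hab) (sub_nonneg.mpr hquad)]

theorem Real.sqrt_mul_one_sub_mul_sq {η x : ℝ} (hx : 0 ≤ x) (hηx : η * x ≤ 1) :
    √(x * (1 - η * x) ^ 2) = √x - η * √x ^ 3 := by
  rw [Real.sqrt_mul hx, Real.sqrt_sq (by linarith), pow_succ, Real.sq_sqrt hx]
  ring

theorem MonotoneOn.map_csSup_of_finite {α β : Type*} [ConditionallyCompleteLinearOrder α]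
    [ConditionallyCompleteLattice β] {f : α → β} {s : Set α} (hf : MonotoneOn f s)
    (hs : s.Nonempty) (hfin : s.Finite) : sSup (f '' s) = f (sSup s) :=
  (hf.map_isGreatest ⟨hs.csSup_mem hfin, fun _ hx => le_csSup hfin.bddAbove hx⟩).csSup_eq

theorem MonotoneOn.map_csInf_of_finite {α β : Type*} [ConditionallyCompleteLinearOrder α]
    [ConditionallyCompleteLattice β] {f : α → β} {s : Set α} (hf : MonotoneOn f s)
    (hs : s.Nonempty) (hfin : s.Finite) : sInf (f '' s) = f (sInf s) :=
  (hf.map_isLeast ⟨hs.csInf_mem hfin, fun _ hx => csInf_le hfin.bddBelow hx⟩).csInf_eq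

namespace Matrix

variable {m n : Type*} [Fintype m] [Fintype n] [DecidableEq m] [DecidableEq n]

theorem mul_one_sub_smul_mul_conjTranspose_eq_cfc (A : Matrix m n ℝ) (η : ℝ) :
    A * (1 - η • (Aᵀ * A)) * (A * (1 - η • (Aᵀ * A)))ᴴ =
      cfc (fun x => x * (1 - η * x) ^ 2) (A * Aᴴ) := by
  have hcfc : cfc (fun x => x * (1 - η * x) ^ 2) (A * Aᴴ) = A * Aᴴ * (1 - η • (A * Aᴴ)) ^ 2 := by
    have := cfc_polynomial (Polynomial.X * (1 - Polynomial.C η * Polynomial.X) ^ 2) (A * Aᴴ)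
      (isHermitian_mul_conjTranspose_self A).isSelfAdjoint
    simpa [Algebra.smul_def] using this
  rw [hcfc]
  simp only [conjTranspose_eq_transpose_of_trivial, transpose_mul, transpose_sub, transpose_smul,
    transpose_transpose, Matrix.mul_sub, Matrix.sub_mul, Matrix.mul_smul, Matrix.smul_mul, Matrix.mul_one,
    Matrix.one_mul, sq, Matrix.mul_assoc, smul_sub, smul_smul]

section L2OpNorm

open scoped Matrix.Norms.L2Operator

theorem IsHermitian.abs_eigenvalues_le_l2_opNorm {𝕜 : Type*} [RCLike 𝕜] {M : Matrix n n 𝕜}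
    (hM : M.IsHermitian) (i : n) : |hM.eigenvalues i| ≤ ‖M‖ := by
  have hv : ‖hM.eigenvectorBasis i‖ = 1 := hM.eigenvectorBasis.orthonormal.1 i
  calc |hM.eigenvalues i|
      = ‖(EuclideanSpace.equiv n 𝕜).symm (M *ᵥ hM.eigenvectorBasis i)‖ := by
        rw [hM.mulVec_eigenvectorBasis]
        simp [norm_smul, hv]
    _ ≤ ‖M‖ * ‖hM.eigenvectorBasis i‖ := l2_opNorm_mulVec M _
    _ = ‖M‖ := by rw [hv, mul_one]

theorem spectrum_mul_conjTranspose_self_subset_Icc (A : Matrix m n ℝ) :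
    spectrum ℝ (A * Aᴴ) ⊆ Set.Icc 0 (‖A‖ ^ 2) := by
  have hAA := isHermitian_mul_conjTranspose_self A
  rw [hAA.spectrum_real_eq_range_eigenvalues]
  rintro _ ⟨i, rfl⟩
  refine ⟨eigenvalues_self_mul_conjTranspose_nonneg A i, ?_⟩
  calc hAA.eigenvalues i ≤ |hAA.eigenvalues i| := le_abs_self _
    _ ≤ ‖A * Aᴴ‖ := hAA.abs_eigenvalues_le_l2_opNorm i
    _ = ‖A‖ ^ 2 := by
      rw [sq, ← l2_opNorm_conjTranspose A, ← l2_opNorm_conjTranspose_mul_self,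
        conjTranspose_conjTranspose]

end L2OpNorm

end Matrix

open scoped Matrix.Norms.L2Operator in
theorem specNorm_eq_l2_opNorm {m n : ℕ} (A : Matrix (Fin m) (Fin n) ℝ) : specNorm A = ‖A‖ := by
  rw [Matrix.l2_opNorm_def]
  rfl

theorem range_sv {m n : ℕ} (A : Matrix (Fin m) (Fin n) ℝ) :
    Set.range (sv A) = Real.sqrt '' spectrum ℝ (A * Aᴴ) := by
  rw [(isHermitian_mul_conjTranspose_self A).spectrum_real_eq_range_eigenvalues, ← Set.range_comp]
  rfl

theorem sigmaMax_eq_csSup {m n : ℕ} (hm : 0 < m) (A : Matrix (Fin m) (Fin n) ℝ) :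
    sigmaMax hm A = sSup (Set.range (sv A)) :=
  (Finset.sup'_eq_csSup_image _ _ _).trans (by rw [Finset.coe_univ, Set.image_univ])

theorem sigmaMin_eq_csInf {m n : ℕ} (hm : 0 < m) (A : Matrix (Fin m) (Fin n) ℝ) :
    sigmaMin hm A = sInf (Set.range (sv A)) :=
  (Finset.inf'_eq_csInf_image _ _ _).trans (by rw [Finset.coe_univ, Set.image_univ])

theorem range_sv_subset_Icc {m n : ℕ} (A : Matrix (Fin m) (Fin n) ℝ) :
    Set.range (sv A) ⊆ Set.Icc 0 (specNorm A) := by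
  rw [range_sv]
  rintro _ ⟨x, hx, rfl⟩
  have hxA := Matrix.spectrum_mul_conjTranspose_self_subset_Icc A hx
  rw [← specNorm_eq_l2_opNorm] at hxA
  exact ⟨Real.sqrt_nonneg x, Real.sqrt_le_left (norm_nonneg _) |>.mpr hxA.2⟩

theorem range_sv_mul_one_sub_smul {m n : ℕ} (A : Matrix (Fin m) (Fin n) ℝ) {η : ℝ} (hη : 0 < η)
    (hA : specNorm A ≤ √(1 / (3 * η))) :
    Set.range (sv (A * (1 - η • (Aᵀ * A)))) = (fun x => x - η * x ^ 3) '' Set.range (sv A) := by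
  rw [range_sv, range_sv, Matrix.mul_one_sub_smul_mul_conjTranspose_eq_cfc,
    cfc_map_spectrum _ _ (isHermitian_mul_conjTranspose_self A).isSelfAdjoint, Set.image_image,
    Set.image_image]
  refine Set.image_congr fun x hx => ?_
  obtain ⟨hx₀, hx₁⟩ := Matrix.spectrum_mul_conjTranspose_self_subset_Icc A hx
  rw [← specNorm_eq_l2_opNorm] at hx₁
  have hA2 : specNorm A ^ 2 ≤ 1 / (3 * η) := by
    rw [← Real.sq_sqrt (by positivity : (0 : ℝ) ≤ 1 / (3 * η))]
    exact pow_le_pow_left₀ (norm_nonneg _) hA 2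
  have hηx : η * x ≤ 1 := by
    have := (le_div_iff₀ (by positivity)).mp (hx₁.trans hA2)
    linarith
  exact Real.sqrt_mul_one_sub_mul_sq hx₀ hηx

/-- If `A` is an `m × n` real matrix and `‖A‖ ≤ √(1/(3η))`, then the largest and smallest singular
values of `A (I - η AᵀA)` are `σ₁(A) - η σ₁(A)³` and `σ_min(A) - η σ_min(A)³`. -/
theorem stmt1 {m n : ℕ} (hm : 0 < m) (A : Matrix (Fin m) (Fin n) ℝ) (η : ℝ) (hη : 0 < η)
    (hA : specNorm A ≤ Real.sqrt (1 / (3 * η))) :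
    sigmaMax hm (A * (1 - η • (Aᵀ * A))) = sigmaMax hm A - η * (sigmaMax hm A) ^ 3 ∧
    sigmaMin hm (A * (1 - η • (Aᵀ * A))) = sigmaMin hm A - η * (sigmaMin hm A) ^ 3 := by
  have hsub : Set.range (sv A) ⊆ Set.Icc (-√(1 / (3 * η))) √(1 / (3 * η)) :=
    (range_sv_subset_Icc A).trans
      (Set.Icc_subset_Icc (by linarith [Real.sqrt_nonneg (1 / (3 * η))]) hA)
  have hne : (Set.range (sv A)).Nonempty := ⟨_, ⟨0, hm⟩, rfl⟩
  have hmono := (monotoneOn_sub_mul_pow_three hη).mono hsub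
  rw [sigmaMax_eq_csSup, sigmaMin_eq_csInf, sigmaMax_eq_csSup, sigmaMin_eq_csInf,
    range_sv_mul_one_sub_smul A hη hA]
  exact ⟨hmono.map_csSup_of_finite hne (Set.finite_range _),
    hmono.map_csInf_of_finite hne (Set.finite_range _)⟩
end

section
/- Consider corrupted samples yᵢ = ỹᵢ + sᵢ for i = 1,…,m, where at most μm of the sᵢ are nonzero and μ < 1/2. For any p with μ < p < 1 − μ, the empirical p-quantile of {|yᵢ|} is sandwiched between empirical quantiles of the clean samples: ξ_{p−μ}({|ỹᵢ|}) ≤ ξ_p({|yᵢ|}) ≤ ξ_{p+μ}({|ỹᵢ|}). -/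
open Finset

private lemma card_filter_perm {m : ℕ} (σ : Equiv.Perm (Fin m)) (P : Fin m → Prop)
    [DecidablePred P] :
    (univ.filter (fun j => P (σ j))).card = (univ.filter P).card := by
  apply Finset.card_bij (fun j _ => σ j)
  · intro j hj; simp only [mem_filter, mem_univ, true_and] at hj ⊢; exact hj
  · intro j1 _ j2 _ h; exact σ.injective h
  · intro i hi
    refine ⟨σ.symm i, ?_, by simp⟩
    simp only [mem_filter, mem_univ, true_and, Equiv.apply_symm_apply] at hi ⊢
    exact hi

private lemma sorted_le_of_card {m : ℕ} (f : Fin m → ℝ) (v : ℝ) (l : ℕ) (hl : l < m)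
    (hcard : l + 1 ≤ (univ.filter (fun i => f i ≤ v)).card) :
    f (Tuple.sort f ⟨l, hl⟩) ≤ v := by
  have hmono : Monotone (f ∘ Tuple.sort f) := Tuple.monotone_sort f
  have hc : l + 1 ≤ (univ.filter (fun j => f (Tuple.sort f j) ≤ v)).card := by
    rw [card_filter_perm (Tuple.sort f) (fun i => f i ≤ v)]; exact hcard
  by_contra hlt
  push_neg at hlt
  have hsub : (univ.filter (fun j => f (Tuple.sort f j) ≤ v)) ⊆ Finset.Iio ⟨l, hl⟩ := by
    intro j hj
    simp only [mem_filter] at hj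
    rw [Finset.mem_Iio]
    by_contra h
    push_neg at h
    exact absurd (le_trans (hmono h) hj.2) (not_le.mpr hlt)
  have h3 : (univ.filter (fun j => f (Tuple.sort f j) ≤ v)).card ≤ l := by
    simpa using Finset.card_le_card hsub
  omega

private lemma card_ge_sorted {m : ℕ} (f : Fin m → ℝ) (k : ℕ) (hk : k < m) :
    k + 1 ≤ (univ.filter (fun i => f i ≤ f (Tuple.sort f ⟨k, hk⟩))).card := by
  rw [← card_filter_perm (Tuple.sort f) (fun i => f i ≤ f (Tuple.sort f ⟨k, hk⟩))]
  have hsub : Finset.Iic (⟨k, hk⟩ : Fin m) ⊆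
      univ.filter (fun j => f (Tuple.sort f j) ≤ f (Tuple.sort f ⟨k, hk⟩)) := by
    intro j hj
    rw [Finset.mem_Iic] at hj
    simp only [mem_filter, mem_univ, true_and]
    exact Tuple.monotone_sort f hj
  have := Finset.card_le_card hsub
  simpa using this

private lemma key_sandwich {m : ℕ} (a b : Fin m → ℝ) (t l k : ℕ) (hl : l < m) (hk : k < m)
    (hlk : l + t ≤ k)
    (hdiff : (univ.filter (fun i => a i ≠ b i)).card ≤ t) :
    a (Tuple.sort a ⟨l, hl⟩) ≤ b (Tuple.sort b ⟨k, hk⟩) := by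
  set v := b (Tuple.sort b ⟨k, hk⟩) with hv
  have h1 : k + 1 ≤ (univ.filter (fun i => b i ≤ v)).card := card_ge_sorted b k hk
  have h2 : (univ.filter (fun i => b i ≤ v)).card
      ≤ (univ.filter (fun i => a i ≤ v)).card + (univ.filter (fun i => a i ≠ b i)).card := by
    have hsub : (univ.filter (fun i => b i ≤ v))
        ⊆ (univ.filter (fun i => a i ≤ v)) ∪ (univ.filter (fun i => a i ≠ b i)) := by
      intro i hi
      simp only [mem_filter, mem_univ, true_and, mem_union] at hi ⊢
      by_cases h : a i = b i
      · left; rw [h]; exact hi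
      · right; exact h
    exact le_trans (Finset.card_le_card hsub) (Finset.card_union_le _ _)
  exact sorted_le_of_card a v l hl (by omega)

/-- Empirical `q`-quantile of `m` samples: the `⌈q m⌉`-th smallest entry. -/
noncomputable def emquantile {m : ℕ} (q : ℝ) (y : Fin m → ℝ) : ℝ :=
  if h : (⌈q * m⌉.toNat - 1) < m then y (Tuple.sort y ⟨⌈q * m⌉.toNat - 1, h⟩) else 0

/-- If `yᵢ = ỹᵢ + sᵢ` with at most `μ m` of the `sᵢ` nonzero and `μ < 1/2`, then for
`μ < p < 1 - μ` the empirical `p`-quantile of `{|yᵢ|}` is sandwiched between the empirical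
`(p - μ)`- and `(p + μ)`-quantiles of the clean samples `{|ỹᵢ|}`. -/
theorem stmt13 {m : ℕ} (hm : 0 < m) (ytil s y : Fin m → ℝ)
    (hy : ∀ i, y i = ytil i + s i)
    (μ p : ℝ) (hμ0 : 0 ≤ μ) (hμ : μ < 1 / 2)
    (hcard : ((Finset.univ.filter (fun i => s i ≠ 0)).card : ℝ) ≤ μ * m)
    (hp1 : μ < p) (hp2 : p < 1 - μ) :
    emquantile (p - μ) (fun i => |ytil i|) ≤ emquantile p (fun i => |y i|) ∧
    emquantile p (fun i => |y i|) ≤ emquantile (p + μ) (fun i => |ytil i|) := by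
  set t := (Finset.univ.filter (fun i => s i ≠ 0)).card with ht
  have hmpos : (0:ℝ) < m := by exact_mod_cast hm
  have hA1 : (1:ℤ) ≤ ⌈(p - μ) * m⌉ := by
    have : (0:ℝ) < (p - μ) * m := by nlinarith
    exact Int.ceil_pos.mpr this
  have hAB : ⌈(p - μ) * m⌉ + (t:ℤ) ≤ ⌈p * m⌉ := by
    have h1 : (t:ℝ) ≤ μ * m := hcard
    calc ⌈(p - μ) * m⌉ + (t:ℤ) = ⌈(p - μ) * m + ((t:ℤ):ℝ)⌉ := (Int.ceil_add_intCast _ _).symm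
      _ ≤ ⌈p * m⌉ := Int.ceil_le_ceil (by push_cast; nlinarith)
  have hBC : ⌈p * m⌉ + (t:ℤ) ≤ ⌈(p + μ) * m⌉ := by
    have h1 : (t:ℝ) ≤ μ * m := hcard
    calc ⌈p * m⌉ + (t:ℤ) = ⌈p * m + ((t:ℤ):ℝ)⌉ := (Int.ceil_add_intCast _ _).symm
      _ ≤ ⌈(p + μ) * m⌉ := Int.ceil_le_ceil (by push_cast; nlinarith)
  have hCm : ⌈(p + μ) * m⌉ ≤ (m:ℤ) := by
    apply Int.ceil_le.mpr
    push_cast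
    nlinarith
  have hkA : ⌈(p - μ) * (m:ℝ)⌉.toNat - 1 < m := by omega
  have hkB : ⌈p * (m:ℝ)⌉.toNat - 1 < m := by omega
  have hkC : ⌈(p + μ) * (m:ℝ)⌉.toNat - 1 < m := by omega
  have hdiff1 : (univ.filter (fun i => |ytil i| ≠ |y i|)).card ≤ t := by
    apply Finset.card_le_card
    intro i hi
    simp only [mem_filter, mem_univ, true_and] at hi ⊢
    intro h
    apply hi
    rw [hy i, h, add_zero]
  have hdiff2 : (univ.filter (fun i => |y i| ≠ |ytil i|)).card ≤ t := by
    apply Finset.card_le_card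
    intro i hi
    simp only [mem_filter, mem_univ, true_and] at hi ⊢
    intro h
    apply hi
    rw [hy i, h, add_zero]
  constructor
  · rw [emquantile, emquantile, dif_pos hkA, dif_pos hkB]
    exact key_sandwich _ _ t _ _ hkA hkB (by omega) hdiff1
  · rw [emquantile, emquantile, dif_pos hkB, dif_pos hkC]
    exact key_sandwich _ _ t _ _ hkB hkC (by omega) hdiff2
end

section
/- Fix p ∈ (0,1/2). Suppose the measurement operator A: Sym(d) → ℝᵐ satisfies, for some δ with 0 < δ < √(2/π), the ℓ₁/ℓ₂-RIP bound |(1/m)‖A(X)‖₁ − √(2/π)‖X‖_F| ≤ δ‖X‖_F for all symmetric X of rank at most k + r, and additionally the restricted operator A_{S^c} (keeping only coordinates outside the corruption set S, with |S^c| ≥ (1−ε)(1−p)m) satisfies |(1/|S^c|)‖A_{S^c}(X)‖₁ − √(2/π)‖X‖_F| ≤ δ‖X‖_F on the same set of matrices. If 2(1−p)(1−ε)(√(2/π) − δ) − (√(2/π) + δ) > 0, then any global minimizer F★ ∈ ℝ^{d×k} of F ↦ (1/(2m))‖A(F Fᵀ) − y‖₁, where yᵢ = ⟨Aᵢ, X♮⟩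 + sᵢ, sᵢ = 0 for i ∉ S, and X♮ is symmetric PSD of rank r ≤ k, satisfies F★F★ᵀ = X♮. -/
open Matrix BigOperators

/-- Frobenius norm of a real matrix. -/
noncomputable def frobNorm {d : ℕ} (A : Matrix (Fin d) (Fin d) ℝ) : ℝ :=
  Real.sqrt (∑ i, ∑ j, (A i j) ^ 2)

/-- Trace inner product of real matrices. -/
def ip {d : ℕ} (A B : Matrix (Fin d) (Fin d) ℝ) : ℝ := ∑ i, ∑ j, A i j * B i j

/-! Put `Z = F Fᵀ - X`, a symmetric matrix of rank at most `k + r`. Comparing the objective at `F`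
with its value at a factor `G Gᵀ = X` gives `∑ᵢ |⟨Aᵢ, Z⟩ - sᵢ| ≤ ∑ᵢ |sᵢ|`; as `s` vanishes off `S`,
the reverse triangle inequality on `S` turns this into `2 ∑_{Sᶜ} |⟨Aᵢ, Z⟩| ≤ ∑ᵢ |⟨Aᵢ, Z⟩|`.
The two RIP bounds estimate the left side from below by `2 |Sᶜ| (√(2/π) - δ) ‖Z‖_F` and the right side
from above by `m (√(2/π) + δ) ‖Z‖_F`, and the lower bound on `|Sᶜ|` makes these incompatible unless
`‖Z‖_F = 0`. -/

theorem Matrix.exists_mul_transpose_eq_of_card_le {m ι R : Type*} [Fintype ι] [CommSemiring R]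
    (N : Matrix m ι R) {k : ℕ} (h : Fintype.card ι ≤ k) :
    ∃ G : Matrix m (Fin k) R, G * Gᵀ = N * Nᵀ := by
  classical
  obtain ⟨e⟩ := Function.Embedding.nonempty_of_card_le (h.trans (Fintype.card_fin k).ge)
  refine ⟨N * (1 : Matrix (Fin k) (Fin k) R).submatrix e id, ?_⟩
  rw [transpose_mul, transpose_submatrix, transpose_one, Matrix.mul_assoc,
    ← Matrix.mul_assoc _ _ Nᵀ, ← submatrix_mul _ _ _ _ _ Function.bijective_id, Matrix.one_mul,
    submatrix_one_embedding, Matrix.one_mul]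

theorem Matrix.exists_mul_transpose_eq_of_apply_eq_zero {m n R : Type*} [Fintype n]
    [CommSemiring R] (M : Matrix m n R) (p : n → Prop) [DecidablePred p]
    (hM : ∀ a j, ¬ p j → M a j = 0) {k : ℕ} (h : Fintype.card {j // p j} ≤ k) :
    ∃ G : Matrix m (Fin k) R, G * Gᵀ = M * Mᵀ := by
  obtain ⟨G, hG⟩ := (M.submatrix id Subtype.val).exists_mul_transpose_eq_of_card_le h
  refine ⟨G, hG.trans ?_⟩
  ext a c
  simp only [Matrix.mul_apply, submatrix_apply, transpose_apply, id]
  rw [← Finset.sum_subtype {j | p j} (fun j => Finset.mem_filter_univ j) (fun j => M a j * M c j)]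
  exact Finset.sum_filter_of_ne fun j _ h => by_contra fun hj => h (by simp [hM a j hj])

theorem Matrix.PosSemidef.exists_mul_transpose_eq_and_apply_eq_zero {n : Type*} [Fintype n] [DecidableEq n]
    {X : Matrix n n ℝ} (hX : X.PosSemidef) :
    ∃ M : Matrix n n ℝ, M * Mᵀ = X ∧ ∀ a j, hX.isHermitian.eigenvalues j = 0 → M a j = 0 := by
  set U : Matrix n n ℝ := (hX.isHermitian.eigenvectorUnitary : Matrix n n ℝ)
  refine ⟨U * diagonal (fun j => √(hX.isHermitian.eigenvalues j)), ?_, fun a j hj => by simp [hj]⟩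
  conv_rhs => rw [hX.isHermitian.spectral_theorem, Unitary.conjStarAlgAut_apply]
  rw [transpose_mul, diagonal_transpose, Matrix.mul_assoc, ← Matrix.mul_assoc (diagonal _),
    diagonal_mul_diagonal]
  simp [U, Real.mul_self_sqrt (hX.eigenvalues_nonneg _), star_eq_conjTranspose,
    conjTranspose_eq_transpose_of_trivial, Matrix.mul_assoc]

theorem Matrix.PosSemidef.exists_mul_transpose_eq_of_rank_le {n : Type*} [Fintype n]
    [DecidableEq n] {X : Matrix n n ℝ} (hX : X.PosSemidef) {k : ℕ} (h : X.rank ≤ k) :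
    ∃ G : Matrix n (Fin k) ℝ, G * Gᵀ = X := by
  obtain ⟨M, rfl, hM⟩ := hX.exists_mul_transpose_eq_and_apply_eq_zero
  rw [hX.isHermitian.rank_eq_card_non_zero_eigs] at h
  exact M.exists_mul_transpose_eq_of_apply_eq_zero _ (fun a j hj => hM a j (not_not.1 hj)) h

theorem frobNorm_nonneg {d : ℕ} (A : Matrix (Fin d) (Fin d) ℝ) : 0 ≤ frobNorm A :=
  Real.sqrt_nonneg _

theorem frobNorm_eq_zero {d : ℕ} {A : Matrix (Fin d) (Fin d) ℝ} : frobNorm A = 0 ↔ A = 0 := by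
  rw [frobNorm, Real.sqrt_eq_zero (by positivity), ← Matrix.ext_iff]
  simp [Finset.sum_eq_zero_iff_of_nonneg, Finset.sum_nonneg, sq_nonneg]

theorem ip_sub_right {d : ℕ} (A B C : Matrix (Fin d) (Fin d) ℝ) :
    ip A (B - C) = ip A B - ip A C := by
  simp only [ip, Matrix.sub_apply, mul_sub, Finset.sum_sub_distrib]

theorem Matrix.rank_sub_le {m n K : Type*} [Fintype m] [Fintype n] [Field K]
    (A B : Matrix m n K) : (A - B).rank ≤ A.rank + B.rank := by
  refine (Submodule.finrank_mono ?_).trans (Submodule.finrank_add_le_finrank_add_finrank _ _)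
  rintro x ⟨v, rfl⟩
  rw [mulVecLin_apply, sub_mulVec]
  exact Submodule.sub_mem _ (Submodule.mem_sup_left ⟨v, rfl⟩) (Submodule.mem_sup_right ⟨v, rfl⟩)

theorem Matrix.rank_mul_transpose_sub_le {n K : Type*} [Fintype n] [Field K] [LinearOrder K]
    [IsStrictOrderedRing K] {k : ℕ} (F : Matrix n (Fin k) K) (X : Matrix n n K) :
    (F * Fᵀ - X).rank ≤ k + X.rank :=
  (rank_sub_le _ _).trans <| add_le_add_left
    ((rank_self_mul_transpose F).trans_le ((rank_le_card_width F).trans_eq (Fintype.card_fin k))) _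

theorem two_mul_sum_compl_abs_le_of_sum_abs_sub_le {ι : Type*} [Fintype ι] [DecidableEq ι]
    {S : Finset ι} {a s : ι → ℝ} (hs : ∀ i ∉ S, s i = 0)
    (h : ∑ i, |a i - s i| ≤ ∑ i, |s i|) : 2 * ∑ i ∈ Sᶜ, |a i| ≤ ∑ i, |a i| := by
  have hsc : ∀ i ∈ Sᶜ, s i = 0 := fun i hi => hs i (Finset.mem_compl.1 hi)
  have hS : ∑ i ∈ S, |s i| - ∑ i ∈ S, |a i| ≤ ∑ i ∈ S, |a i - s i| := by
    rw [← Finset.sum_sub_distrib]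
    exact Finset.sum_le_sum fun i _ => (abs_sub_abs_le_abs_sub _ _).trans_eq (abs_sub_comm _ _)
  have hSc : ∑ i ∈ Sᶜ, |a i - s i| = ∑ i ∈ Sᶜ, |a i| :=
    Finset.sum_congr rfl fun i hi => by rw [hsc i hi, sub_zero]
  have hSc' : ∑ i ∈ Sᶜ, |s i| = 0 := Finset.sum_eq_zero fun i hi => by rw [hsc i hi, abs_zero]
  rw [← Finset.sum_add_sum_compl S] at h ⊢
  rw [← Finset.sum_add_sum_compl S (fun i => |s i|)] at h
  linarith

theorem abs_sum_sub_card_mul_le {ι : Type*} {T : Finset ι} {f : ι → ℝ} {c e : ℝ}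
    (h : |(T.card : ℝ)⁻¹ * ∑ i ∈ T, f i - c| ≤ e) : |∑ i ∈ T, f i - T.card * c| ≤ T.card * e := by
  rcases T.eq_empty_or_nonempty with rfl | hT
  · simp
  have hcard : (0 : ℝ) < T.card := by exact_mod_cast hT.card_pos
  calc |∑ i ∈ T, f i - T.card * c| = T.card * |(T.card : ℝ)⁻¹ * ∑ i ∈ T, f i - c| := by
        rw [← abs_of_pos hcard, ← abs_mul, abs_of_pos hcard, mul_sub, mul_inv_cancel_left₀ hcard.ne']
    _ ≤ T.card * e := by gcongr

theorem stmt17_general {d k r m : ℕ} (A : Fin m → Matrix (Fin d) (Fin d) ℝ)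
    (p ε δ : ℝ) (hδ : δ < Real.sqrt (2 / Real.pi))
    (hRIP : ∀ X : Matrix (Fin d) (Fin d) ℝ, Xᵀ = X → X.rank ≤ k + r →
      |(m : ℝ)⁻¹ * ∑ i, |ip (A i) X| - Real.sqrt (2 / Real.pi) * frobNorm X| ≤ δ * frobNorm X)
    (S : Finset (Fin m))
    (hScard : (1 - ε) * (1 - p) * m ≤ (Sᶜ.card : ℝ))
    (hRIPc : ∀ X : Matrix (Fin d) (Fin d) ℝ, Xᵀ = X → X.rank ≤ k + r →
      |((Sᶜ.card : ℝ))⁻¹ * ∑ i ∈ Sᶜ, |ip (A i) X| - Real.sqrt (2 / Real.pi) * frobNorm X|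
        ≤ δ * frobNorm X)
    (hcond : 0 < 2 * (1 - p) * (1 - ε) * (Real.sqrt (2 / Real.pi) - δ)
        - (Real.sqrt (2 / Real.pi) + δ))
    (X : Matrix (Fin d) (Fin d) ℝ) (hXpsd : X.PosSemidef) (hXrank : X.rank = r) (hrk : r ≤ k)
    (s y : Fin m → ℝ) (hs : ∀ i ∉ S, s i = 0) (hy : ∀ i, y i = ip (A i) X + s i)
    (F : Matrix (Fin d) (Fin k) ℝ)
    (hmin : ∀ G : Matrix (Fin d) (Fin k) ℝ,
      (1 / (2 * m : ℝ)) * ∑ i, |ip (A i) (F * Fᵀ) - y i| ≤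
        (1 / (2 * m : ℝ)) * ∑ i, |ip (A i) (G * Gᵀ) - y i|) :
    F * Fᵀ = X := by
  set Z := F * Fᵀ - X
  have hZt : Zᵀ = Z := by
    rw [transpose_sub, transpose_mul, transpose_transpose,
      (isHermitian_iff_isSymm.1 hXpsd.isHermitian).eq]
  have hZrank : Z.rank ≤ k + r := hXrank ▸ F.rank_mul_transpose_sub_le X
  suffices hZ : frobNorm Z = 0 from sub_eq_zero.1 (frobNorm_eq_zero.1 hZ)
  set q := Real.sqrt (2 / Real.pi)
  have hz := frobNorm_nonneg Z
  obtain rfl | hm := Nat.eq_zero_or_pos m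
  · -- with no measurements the RIP bound alone reads `√(2/π) ‖Z‖_F ≤ δ ‖Z‖_F`
    have h := hRIP Z hZt hZrank
    simp only [Finset.univ_eq_empty, Finset.sum_empty, mul_zero, zero_sub, abs_neg] at h
    nlinarith [le_abs_self (q * frobNorm Z)]
  obtain ⟨G, hG⟩ := hXpsd.exists_mul_transpose_eq_of_rank_le (hXrank.trans_le hrk)
  have hl1 : 2 * ∑ i ∈ Sᶜ, |ip (A i) Z| ≤ ∑ i, |ip (A i) Z| := by
    have hobj := le_of_mul_le_mul_left (hmin G) (by positivity)
    have hF : ∀ i, ip (A i) (F * Fᵀ) - y i = ip (A i) Z - s i := fun i => by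
      rw [hy, ip_sub_right]; ring
    have hs' : ∀ i, |ip (A i) X - y i| = |s i| := fun i => by
      rw [hy, sub_add_cancel_left, abs_neg]
    simp only [hF, hG, hs'] at hobj
    exact two_mul_sum_compl_abs_le_of_sum_abs_sub_le hs hobj
  have hcard : ((Finset.univ : Finset (Fin m)).card : ℝ) = m := by simp
  have hup := hRIP Z hZt hZrank
  rw [← hcard] at hup
  replace hup := (abs_le.1 (abs_sum_sub_card_mul_le hup)).2
  have hlow := (abs_le.1 (abs_sum_sub_card_mul_le (hRIPc Z hZt hZrank))).1
  rw [hcard] at hup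
  by_contra hz0
  have hκ := mul_pos hcond (mul_pos (Nat.cast_pos.2 hm) (hz.lt_of_ne' hz0))
  have hθ := mul_le_mul_of_nonneg_right hScard (mul_nonneg (sub_nonneg.2 hδ.le) hz)
  linarith

/-- Identifiability under `ℓ₁/ℓ₂`-RIP: any global minimizer `F★` of the robust `ℓ₁` objective
recovers the ground truth, `F★ F★ᵀ = X♮`. -/
theorem stmt17 {d k r m : ℕ} (A : Fin m → Matrix (Fin d) (Fin d) ℝ)
    (p ε δ : ℝ) (hp0 : 0 < p) (hp : p < 1 / 2) (hε : 0 ≤ ε)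
    (hδ0 : 0 < δ) (hδ : δ < Real.sqrt (2 / Real.pi))
    (hRIP : ∀ X : Matrix (Fin d) (Fin d) ℝ, Xᵀ = X → X.rank ≤ k + r →
      |(m : ℝ)⁻¹ * ∑ i, |ip (A i) X| - Real.sqrt (2 / Real.pi) * frobNorm X| ≤ δ * frobNorm X)
    (S : Finset (Fin m))
    (hScard : (1 - ε) * (1 - p) * m ≤ (Sᶜ.card : ℝ))
    (hRIPc : ∀ X : Matrix (Fin d) (Fin d) ℝ, Xᵀ = X → X.rank ≤ k + r →
      |((Sᶜ.card : ℝ))⁻¹ * ∑ i ∈ Sᶜ, |ip (A i) X| - Real.sqrt (2 / Real.pi) * frobNorm X|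
        ≤ δ * frobNorm X)
    (hcond : 0 < 2 * (1 - p) * (1 - ε) * (Real.sqrt (2 / Real.pi) - δ)
        - (Real.sqrt (2 / Real.pi) + δ))
    (X : Matrix (Fin d) (Fin d) ℝ) (hXpsd : X.PosSemidef) (hXrank : X.rank = r) (hrk : r ≤ k)
    (s y : Fin m → ℝ) (hs : ∀ i ∉ S, s i = 0) (hy : ∀ i, y i = ip (A i) X + s i)
    (F : Matrix (Fin d) (Fin k) ℝ)
    (hmin : ∀ G : Matrix (Fin d) (Fin k) ℝ,
      (1 / (2 * m : ℝ)) * ∑ i, |ip (A i) (F * Fᵀ) - y i| ≤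
        (1 / (2 * m : ℝ)) * ∑ i, |ip (A i) (G * Gᵀ) - y i|) :
    F * Fᵀ = X :=
  stmt17_general A p ε δ hδ hRIP S hScard hRIPc hcond X hXpsd hXrank hrk s y hs hy F hmin
end
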